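/- arXiv:nlin/0306032 — 2 statements merged into one kernel-verified Lean document; each statement's English description precedes it below -/
import Mathlib

section
/- Let F be a number-conserving one-dimensional CA with finite state set S ⊂ ℤ and neighborhood of size n. Then F is a sub-automaton of a number-conserving CA F̃ whose state set is the full interval {0, 1, ..., max S − min S} and whose neighborhood has size 2n. -/
open Finset

/-- Global map of a 1D CA: the local rule `f` is applied to the window of `c` around each cell. -/
def glob (f : (ℤ → ℤ) → ℤ) (c : ℤ → ℤ) : ℤ → ℤ := fun i => f (fun j => c (i + j))

/-- A configuration over state set `S`. -/
def Config (S : Finset ℤ) (c : ℤ → ℤ) : Prop := ∀ i, c i ∈ S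

/-- `p` is a (spatial) period of `c`. -/
def Per (p : ℕ) (c : ℤ → ℤ) : Prop := ∀ i : ℤ, c (i + (p : ℤ)) = c i

/-- The local rule only depends on the neighborhood `{-l,...,r}`. -/
def LocalRule (l r : ℕ) (f : (ℤ → ℤ) → ℤ) : Prop :=
  ∀ c d : ℤ → ℤ, (∀ j : ℤ, -(l : ℤ) ≤ j → j ≤ (r : ℤ) → c j = d j) → f c = f d

/-- The rule maps `S`-configurations to states in `S`. -/
def Closed (S : Finset ℤ) (f : (ℤ → ℤ) → ℤ) : Prop :=
  ∀ c, Config S c → f c ∈ S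

/-- Number conservation: the sum over one period of any spatially periodic
configuration is preserved by the global map. -/
def NC (S : Finset ℤ) (f : (ℤ → ℤ) → ℤ) : Prop :=
  ∀ c : ℤ → ℤ, Config S c → ∀ p : ℕ, 0 < p → Per p c →
    ∑ k ∈ Finset.range p, glob f c (k : ℤ) = ∑ k ∈ Finset.range p, c (k : ℤ)

/-!
Translate the states so that `min S = 0`, and let `K = max S - min S`. Number conservation for
finite patterns on a background of `0`s gives the flux representation
`f x = x r + J x - J (x ∘ (· + 1))`, where `J = flux l r f` only sees `x` on the window `[-l, r)`.
Since `f` takes values in `[0, K]`, `J` satisfies the difference constraints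
`J (x ∘ (· + 1)) ≤ J x + x r` and `J x ≤ J (x ∘ (· + 1)) + K - x r` on `S`-configurations. A
shortest-path construction (`potential`) extends `J` to a `Φ` keeping these constraints on all
`[0, K]`-valued windows, so `c ↦ c r + Φ c - Φ (c ∘ (· + 1))` maps into `[0, K]`, agrees with `f`
on `S`-configurations, and is number-conserving because the `Φ`-terms telescope over a period.
Its neighbourhood is that of `f`; enlarging it gives the size `2n` of the statement.
-/

theorem Function.Periodic.sum_range_add {M : Type*} [AddCancelCommMonoid M] {c : ℤ → M} {p : ℕ}
    (hc : Function.Periodic c p) (t : ℤ) :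
    ∑ k ∈ range p, c (k + t) = ∑ k ∈ range p, c k := by
  have step : ∀ t : ℤ, ∑ k ∈ range p, c (k + (t + 1)) = ∑ k ∈ range p, c (k + t) := by
    intro t
    have h := (sum_range_succ (fun k : ℕ => c (k + t)) p).symm.trans
      (sum_range_succ' (fun k : ℕ => c (k + t)) p)
    simp only [Nat.cast_add, Nat.cast_one, Nat.cast_zero, zero_add, add_comm (p : ℤ) t, hc t,
      add_assoc, add_comm (1 : ℤ) t] at h
    exact (add_right_cancel h).symm
  induction t using Int.induction_on with
  | zero => simp
  | succ t ih => rw [step, ih]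
  | pred t ih => rw [← step, sub_add_cancel, ih]

section Basic

variable {S : Finset ℤ} {l r : ℕ} {f : (ℤ → ℤ) → ℤ}

theorem LocalRule.mono {l' r' : ℕ} (hf : LocalRule l r f) (hl : l ≤ l') (hr : r ≤ r') :
    LocalRule l' r' f :=
  fun c d h => hf c d fun j hj₁ hj₂ => h j (by omega) (by omega)

theorem LocalRule.glob_eq (hf : LocalRule l r f) {c d : ℤ → ℤ} {i i' : ℤ}
    (h : ∀ t : ℤ, -(l : ℤ) ≤ t → t ≤ r → c (i + t) = d (i' + t)) :
    glob f c i = glob f d i' :=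
  hf _ _ h

theorem Config.indicator {c : ℤ → ℤ} (hc : Config S c) (h0 : 0 ∈ S) (s : Set ℤ) :
    Config S (s.indicator c) := by
  intro j
  by_cases hj : j ∈ s
  · rw [Set.indicator_of_mem hj]; exact hc j
  · rw [Set.indicator_of_notMem hj]; exact h0

theorem Config.shift {c : ℤ → ℤ} (hc : Config S c) (t : ℤ) : Config S (fun j => c (t + j)) :=
  fun j => hc (t + j)

theorem Config.update {c : ℤ → ℤ} (hc : Config S c) (j : ℤ) {a : ℤ} (ha : a ∈ S) :
    Config S (Function.update c j a) := fun i => by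
  rw [Function.update_apply]
  split_ifs
  exacts [ha, hc i]

theorem Closed.glob_mem (hf : Closed S f) {c : ℤ → ℤ} (hc : Config S c) (i : ℤ) :
    glob f c i ∈ S :=
  hf _ (hc.shift i)

/-- The neighbourhoods of the cells `b, …, b + P - 1` only reach the wrapped-around copies of `u`
where both `u` and its copy vanish. -/
theorem LocalRule.glob_wrap {u : ℤ → ℤ} {b : ℤ} {P : ℕ} (hl : LocalRule l r f)
    (hP : l + r ≤ P) (hu : ∀ j, j < b + r ∨ b + P ≤ j + l → u j = 0) {k : ℕ} (hk : k < P) :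
    glob f (fun j => u (b + j % P)) k = glob f u (b + k) := by
  refine hl.glob_eq fun t ht₁ ht₂ => ?_
  rcases lt_or_ge ((k : ℤ) + t) 0 with hneg | hnn
  · have hmod : ((k : ℤ) + t) % P = k + t + P := by
      rw [← Int.add_emod_right]; exact Int.emod_eq_of_lt (by omega) (by omega)
    rw [hmod, hu (b + (k + t + P)) (by omega), hu (b + k + t) (by omega)]
  rcases lt_or_ge ((k : ℤ) + t) P with hlt | hge
  · rw [Int.emod_eq_of_lt hnn hlt, add_assoc]
  · have hmod : ((k : ℤ) + t) % P = k + t - P := by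
      rw [← Int.sub_emod_right]; exact Int.emod_eq_of_lt (by omega) (by omega)
    rw [hmod, hu (b + (k + t - P)) (by omega), hu (b + k + t) (by omega)]

/-- Apply `NC` to the periodization of the pattern, with a period leaving room for the
neighbourhoods. -/
theorem NC.sum_glob_indicator (hNC : NC S f) (hl : LocalRule l r f) (h0 : 0 ∈ S) {x : ℤ → ℤ}
    (hx : Config S x) (a : ℤ) (L : ℕ) :
    ∑ k ∈ range (L + l + r), glob f ((Set.Ico a (a + L)).indicator x) (a - r + k) =
      ∑ k ∈ range L, x (a + k) := by
  set u := (Set.Ico a (a + L)).indicator x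
  set P := L + l + r
  have hu : ∀ j, j < a ∨ a + L ≤ j → u j = 0 := fun j hj =>
    Set.indicator_of_notMem (by simp only [Set.mem_Ico]; omega) x
  rcases Nat.eq_zero_or_pos P with hP | hP
  · simp [show L = 0 by omega, hP]
  set c : ℤ → ℤ := fun j => u (a - r + j % P)
  have hc : Config S c := fun j => hx.indicator h0 _ _
  have hper : Per P c := fun j => by simp only [c, Int.add_emod_right]
  have hglob : ∀ k ∈ range P, glob f c k = glob f u (a - r + k) := fun k hk =>
    hl.glob_wrap (by omega) (fun j hj => hu j (by omega)) (mem_range.mp hk)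
  have hcu : ∀ k ∈ range P, c k = u (a - r + k) := fun k hk => by
    have hk : (k : ℤ) < P := by exact_mod_cast mem_range.mp hk
    simp only [c, Int.emod_eq_of_lt (Int.natCast_nonneg k) hk]
  have hleft : ∑ k ∈ range r, u (a - r + k) = 0 :=
    sum_eq_zero fun k hk => hu _ (by simp only [mem_range] at hk; omega)
  have hright : ∑ k ∈ range l, u (a + (L + k : ℕ)) = 0 :=
    sum_eq_zero fun k _ => hu _ (by omega)
  have hmid : ∑ k ∈ range L, u (a + k) = ∑ k ∈ range L, x (a + k) :=
    sum_congr rfl fun k hk =>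
      Set.indicator_of_mem (by simp only [mem_range] at hk; simp only [Set.mem_Ico]; omega) x
  calc ∑ k ∈ range P, glob f u (a - r + k)
      = ∑ k ∈ range P, u (a - r + k) := by
        rw [← sum_congr rfl hglob, hNC c hc P hP hper, sum_congr rfl hcu]
    _ = ∑ k ∈ range r, u (a - r + k) +
          (∑ k ∈ range L, u (a + k) + ∑ k ∈ range l, u (a + (L + k : ℕ))) := by
        rw [show P = r + (L + l) by omega, sum_range_add, sum_range_add]
        push_cast; ring_nf
    _ = ∑ k ∈ range L, x (a + k) := by rw [hleft, hright, hmid, zero_add, add_zero]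

end Basic

noncomputable def flux (l r : ℕ) (f : (ℤ → ℤ) → ℤ) (x : ℤ → ℤ) : ℤ :=
  ∑ k ∈ range (l + r), glob f ((Set.Ico (-(l : ℤ)) r).indicator x) k

section Flux

variable {S : Finset ℤ} {l r : ℕ} {f : (ℤ → ℤ) → ℤ}

theorem flux_congr {x y : ℤ → ℤ} (h : Set.EqOn x y (Set.Ico (-(l : ℤ)) r)) :
    flux l r f x = flux l r f y := by
  rw [flux, flux, Set.indicator_congr h]

/-- Compare number conservation for `x` truncated to `[-l, r]` and to `[-l, r)`: the images agree
left of cell `0`, and right of it they add up to the two fluxes. -/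
theorem NC.eq_add_flux_sub_flux (hNC : NC S f) (hl : LocalRule l r f) (h0 : 0 ∈ S)
    {x : ℤ → ℤ} (hx : Config S x) :
    f x = x r + flux l r f x - flux l r f (fun j => x (j + 1)) := by
  have hU := hNC.sum_glob_indicator hl h0 hx (-l) (l + r + 1)
  have hV := hNC.sum_glob_indicator hl h0 hx (-l) (l + r)
  have hend : -(l : ℤ) + ((l + r : ℕ) : ℤ) = r := by push_cast; ring
  rw [hend] at hV
  rw [sum_range_succ, hend] at hU
  rw [show l + r + 1 + l + r = (l + r) + (l + r + 1) by omega, sum_range_add,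
    sum_range_succ'] at hU
  rw [show l + r + l + r = (l + r) + (l + r) by omega, sum_range_add] at hV
  have hleft : ∀ k ∈ range (l + r),
      glob f ((Set.Ico (-(l : ℤ)) (-l + ((l + r + 1 : ℕ) : ℤ))).indicator x) (-l - r + k) =
      glob f ((Set.Ico (-(l : ℤ)) r).indicator x) (-l - r + k) := by
    intro k hk
    simp only [mem_range] at hk
    refine hl.glob_eq fun t ht₁ ht₂ => ?_
    simp only [Set.indicator_apply, Set.mem_Ico]
    split_ifs <;> first | rfl | omega
  have hright : ∀ k ∈ range (l + r),
      glob f ((Set.Ico (-(l : ℤ)) (-l + ((l + r + 1 : ℕ) : ℤ))).indicator x)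
        (-l - r + ((l + r + (k + 1) : ℕ) : ℤ)) =
      glob f ((Set.Ico (-(l : ℤ)) r).indicator fun j => x (j + 1)) k := by
    intro k hk
    refine hl.glob_eq fun t ht₁ ht₂ => ?_
    simp only [Set.indicator_apply, Set.mem_Ico]
    push_cast
    split_ifs <;> first | rfl | omega | (congr 1; ring)
  have hcentre : glob f ((Set.Ico (-(l : ℤ)) (-l + ((l + r + 1 : ℕ) : ℤ))).indicator x)
      (-l - r + ((l + r + 0 : ℕ) : ℤ)) = f x := by
    refine hl _ _ fun t ht₁ ht₂ => ?_
    simp only [Set.indicator_apply, Set.mem_Ico]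
    push_cast
    split_ifs <;> first | omega | (congr 1; ring)
  have hflux : ∀ k ∈ range (l + r),
      glob f ((Set.Ico (-(l : ℤ)) r).indicator x) (-l - r + ((l + r + k : ℕ) : ℤ)) =
      glob f ((Set.Ico (-(l : ℤ)) r).indicator x) k := by
    intro k _
    congr 1; push_cast; ring
  rw [sum_congr rfl hleft, sum_congr rfl hright, hcentre] at hU
  rw [sum_congr rfl hflux] at hV
  rw [flux, flux]
  linarith

end Flux

section Extension

variable {S : Finset ℤ} {K : ℤ} {l r : ℕ} {f : (ℤ → ℤ) → ℤ}

theorem flux_nonneg (h0 : 0 ∈ S) (hSK : S ⊆ Icc 0 K) (hC : Closed S f) {x : ℤ → ℤ}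
    (hx : Config S x) : 0 ≤ flux l r f x :=
  sum_nonneg fun k _ => (mem_Icc.mp (hSK (hC.glob_mem (hx.indicator h0 _) k))).1

theorem flux_shift_le (hNC : NC S f) (hl : LocalRule l r f) (h0 : 0 ∈ S) (hSK : S ⊆ Icc 0 K)
    (hC : Closed S f) {x : ℤ → ℤ} (hx : Config S x) :
    flux l r f (fun j => x (j + 1)) ≤ flux l r f x + x r := by
  have := (mem_Icc.mp (hSK (hC x hx))).1
  rw [hNC.eq_add_flux_sub_flux hl h0 hx] at this
  linarith

theorem flux_le_shift (hNC : NC S f) (hl : LocalRule l r f) (h0 : 0 ∈ S) (hSK : S ⊆ Icc 0 K)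
    (hC : Closed S f) {x : ℤ → ℤ} (hx : Config S x) :
    flux l r f x ≤ flux l r f (fun j => x (j + 1)) + (K - x r) := by
  have := (mem_Icc.mp (hSK (hC x hx))).2
  rw [hNC.eq_add_flux_sub_flux hl h0 hx] at this
  linarith

def Admissible (S : Finset ℤ) (l r : ℕ) (c s : ℤ → ℤ) : Prop :=
  Config S s ∧ ∀ j ∈ Set.Ico (-(l : ℤ)) r, c j ∈ S → s j = c j

def excess (l r : ℕ) (c s : ℤ → ℤ) : ℤ :=
  ∑ k ∈ range (l + r), max (c (k - l) - s (k - l)) 0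

/-- Rounding a cell up to a state of `S` is free and rounding it down costs the difference:
this asymmetry is what lets `potential` inherit both `flux_shift_le` and `flux_le_shift`. -/
noncomputable def potential (S : Finset ℤ) (l r : ℕ) (f : (ℤ → ℤ) → ℤ) (c : ℤ → ℤ) : ℤ :=
  sInf ((fun s => flux l r f s + excess l r c s) '' {s | Admissible S l r c s})

theorem sum_window_add (h : ℤ → ℤ) :
    ∑ k ∈ range (l + r), h (k - l) + h r = h (-l) + ∑ k ∈ range (l + r), h (k - l + 1) := by
  have h₁ := sum_range_succ (fun k : ℕ => h (k - l)) (l + r)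
  have h₂ := sum_range_succ' (fun k : ℕ => h (k - l)) (l + r)
  simp only [Nat.cast_add, Nat.cast_one, Nat.cast_zero, add_sub_cancel_left, zero_sub,
    add_sub_right_comm _ (1 : ℤ)] at h₁ h₂
  rw [← h₁, h₂, add_comm]

theorem excess_shift (c x : ℤ → ℤ) :
    excess l r (fun j => c (j + 1)) (fun j => x (j + 1)) + max (c (-l) - x (-l)) 0 =
      excess l r c x + max (c r - x r) 0 := by
  rw [excess, excess, sum_window_add (fun j => max (c j - x j) 0), add_comm]

theorem excess_nonneg (c s : ℤ → ℤ) : 0 ≤ excess l r c s :=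
  sum_nonneg fun _ _ => le_max_right _ _

theorem excess_congr {c x y : ℤ → ℤ} (h : Set.EqOn x y (Set.Ico (-(l : ℤ)) r)) :
    excess l r c x = excess l r c y :=
  sum_congr rfl fun k hk => by
    rw [h (by simp only [mem_range] at hk; simp only [Set.mem_Ico]; omega)]

theorem potential_congr {c d : ℤ → ℤ} (h : Set.EqOn c d (Set.Ico (-(l : ℤ)) r)) :
    potential S l r f c = potential S l r f d := by
  have hadm : ∀ s, Admissible S l r c s ↔ Admissible S l r d s := fun s =>
    and_congr_right fun _ => forall₂_congr fun j hj => by rw [h hj]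
  have hexc : ∀ s, excess l r c s = excess l r d s := fun s =>
    sum_congr rfl fun k hk => by
      rw [h (by simp only [mem_range] at hk; simp only [Set.mem_Ico]; omega)]
  simp only [potential, hadm, hexc]

theorem exists_admissible (h0 : 0 ∈ S) (c : ℤ → ℤ) : ∃ s, Admissible S l r c s :=
  ⟨fun j => if c j ∈ S then c j else 0, fun j => by dsimp only; split_ifs <;> assumption,
    fun _ _ hj => if_pos hj⟩

theorem bddBelow_flux_add_excess (h0 : 0 ∈ S) (hSK : S ⊆ Icc 0 K) (hC : Closed S f)
    (c : ℤ → ℤ) :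
    BddBelow ((fun s => flux l r f s + excess l r c s) '' {s | Admissible S l r c s}) := by
  refine ⟨0, ?_⟩
  rintro _ ⟨s, hs, rfl⟩
  exact add_nonneg (flux_nonneg h0 hSK hC hs.1) (excess_nonneg c s)

theorem potential_le (h0 : 0 ∈ S) (hSK : S ⊆ Icc 0 K) (hC : Closed S f) {c s : ℤ → ℤ}
    (hs : Admissible S l r c s) : potential S l r f c ≤ flux l r f s + excess l r c s :=
  csInf_le (bddBelow_flux_add_excess h0 hSK hC c) ⟨s, hs, rfl⟩

theorem exists_flux_add_excess_eq_potential (h0 : 0 ∈ S) (hSK : S ⊆ Icc 0 K)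
    (hC : Closed S f) (c : ℤ → ℤ) :
    ∃ s, Admissible S l r c s ∧ flux l r f s + excess l r c s = potential S l r f c := by
  obtain ⟨s, hs⟩ := exists_admissible (l := l) (r := r) h0 c
  exact Int.csInf_mem ⟨_, Set.mem_image_of_mem _ (show s ∈ {s | Admissible S l r c s} from hs)⟩
    (bddBelow_flux_add_excess h0 hSK hC c)

theorem potential_eq_flux (h0 : 0 ∈ S) (hSK : S ⊆ Icc 0 K) (hC : Closed S f) {x : ℤ → ℤ}
    (hx : Config S x) : potential S l r f x = flux l r f x := by
  refine le_antisymm ?_ ?_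
  · have := potential_le (l := l) (r := r) (f := f) h0 hSK hC ⟨hx, fun _ _ _ => rfl⟩
    simpa [excess] using this
  · obtain ⟨s, hs, hs_eq⟩ := exists_flux_add_excess_eq_potential (l := l) (r := r) (f := f)
      h0 hSK hC x
    have : flux l r f s = flux l r f x := flux_congr fun j hj => hs.2 j hj (hx j)
    linarith [excess_nonneg (l := l) (r := r) x s]

theorem potential_shift_le (hNC : NC S f) (hl : LocalRule l r f) (h0 : 0 ∈ S)
    (hSK : S ⊆ Icc 0 K) (hC : Closed S f) {c : ℤ → ℤ} (hc : 0 ≤ c r) :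
    potential S l r f (fun j => c (j + 1)) ≤ potential S l r f c + c r := by
  obtain ⟨s, hs, hs_eq⟩ := exists_flux_add_excess_eq_potential (l := l) (r := r) h0 hSK hC c
  set a := if c r ∈ S then c r else 0 with ha_def
  have ha : a ∈ S := by rw [ha_def]; split_ifs with h <;> assumption
  have ha_le : a ≤ c r := by rw [ha_def]; split_ifs <;> omega
  set x := Function.update s r a
  have hxr : x r = a := Function.update_self _ _ _
  have hx_ne : ∀ j : ℤ, j ≠ r → x j = s j := fun j hj => Function.update_of_ne hj _ _
  have hx : Config S x := hs.1.update r ha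
  have hxs : Set.EqOn x s (Set.Ico (-(l : ℤ)) r) := fun j hj => hx_ne j (ne_of_lt hj.2)
  have hadm : Admissible S l r (fun j => c (j + 1)) (fun j => x (j + 1)) := by
    refine ⟨fun j => hx (j + 1), fun j hj hcj => ?_⟩
    change c (j + 1) ∈ S at hcj
    change x (j + 1) = c (j + 1)
    by_cases hjr : j + 1 = r
    · rw [hjr] at hcj ⊢
      rw [hxr, ha_def, if_pos hcj]
    · rw [hx_ne _ hjr]
      exact hs.2 (j + 1) ⟨by linarith [hj.1], lt_of_le_of_ne hj.2 hjr⟩ hcj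
  have hflux := flux_shift_le hNC hl h0 hSK hC hx
  have hexc := excess_shift (l := l) (r := r) c x
  rw [flux_congr hxs, hxr] at hflux
  rw [excess_congr hxs, hxr, max_eq_left (by omega : 0 ≤ c r - a)] at hexc
  calc potential S l r f (fun j => c (j + 1))
      ≤ flux l r f (fun j => x (j + 1)) + excess l r (fun j => c (j + 1)) (fun j => x (j + 1)) :=
        potential_le h0 hSK hC hadm
    _ ≤ potential S l r f c + c r := by
        linarith [le_max_right (c (-l) - x (-l)) 0]

theorem potential_le_shift (hNC : NC S f) (hl : LocalRule l r f) (h0 : 0 ∈ S) (hK : K ∈ S)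
    (hSK : S ⊆ Icc 0 K) (hC : Closed S f) {c : ℤ → ℤ} (hc : c (-l) ≤ K) :
    potential S l r f c ≤ potential S l r f (fun j => c (j + 1)) + (K - c r) := by
  obtain ⟨s, hs, hs_eq⟩ := exists_flux_add_excess_eq_potential (l := l) (r := r) h0 hSK hC
    (fun j => c (j + 1))
  set b := if c (-l) ∈ S then c (-l) else K with hb_def
  have hb : b ∈ S := by rw [hb_def]; split_ifs with h <;> assumption
  have hb_ge : c (-l) ≤ b := by rw [hb_def]; split_ifs <;> omega
  set x := Function.update (fun j => s (j - 1)) (-l) b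
  have hxl : x (-l) = b := Function.update_self _ _ _
  have hx_ne : ∀ j : ℤ, j ≠ -l → x j = s (j - 1) := fun j hj => Function.update_of_ne hj _ _
  have hx : Config S x := Config.update (c := fun j => s (j - 1)) (fun j => hs.1 (j - 1)) (-l) hb
  have hxs : Set.EqOn (fun j => x (j + 1)) s (Set.Ico (-(l : ℤ)) r) := fun j hj => by
    change x (j + 1) = s j
    rw [hx_ne _ (by linarith [hj.1]), add_sub_cancel_right]
  have hadm : Admissible S l r c x := by
    refine ⟨hx, fun j hj hcj => ?_⟩
    by_cases hjl : j = -l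
    · rw [hjl] at hcj ⊢
      rw [hxl, hb_def, if_pos hcj]
    · have := hs.2 (j - 1) ⟨by have := hj.1; omega, by linarith [hj.2]⟩
        (show c (j - 1 + 1) ∈ S by rwa [sub_add_cancel])
      rw [hx_ne j hjl]
      simpa only [sub_add_cancel] using this
  have hflux := flux_le_shift hNC hl h0 hSK hC hx
  have hexc := excess_shift (l := l) (r := r) c x
  rw [flux_congr hxs] at hflux
  rw [excess_congr hxs, hxl, max_eq_right (by omega : c (-l) - b ≤ 0)] at hexc
  calc potential S l r f c ≤ flux l r f x + excess l r c x := potential_le h0 hSK hC hadm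
    _ ≤ potential S l r f (fun j => c (j + 1)) + (K - c r) := by
        linarith [le_max_left (c r - x r) 0]

end Extension

theorem nc_of_eq_add_sub (T : Finset ℤ) {r : ℕ} {g : (ℤ → ℤ) → ℤ} (P : (ℤ → ℤ) → ℤ)
    (hg : ∀ c, g c = c r + P c - P (fun j => c (j + 1))) : NC T g := by
  intro c _ p _ hper
  have hterm : ∀ k : ℕ, glob g c k =
      c (k + r) + (P (fun j => c (k + j)) - P (fun j => c ((k + 1 : ℕ) + j))) := by
    intro k
    rw [glob, hg, add_sub_assoc]
    congr 3
    funext j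
    push_cast
    ring_nf
  have hwrap : (fun j => c ((p : ℕ) + j)) = fun j => c ((0 : ℕ) + j) := by
    funext j
    rw [add_comm, hper, Nat.cast_zero, zero_add]
  rw [sum_congr rfl fun k _ => hterm k, sum_add_distrib,
    sum_range_sub' (fun k : ℕ => P fun j => c (k + j)), hwrap, sub_self, add_zero]
  exact Function.Periodic.sum_range_add hper r

noncomputable def extendedRule (S : Finset ℤ) (l r : ℕ) (f : (ℤ → ℤ) → ℤ) (c : ℤ → ℤ) : ℤ :=
  c r + potential S l r f c - potential S l r f (fun j => c (j + 1))

section ExtendedRule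

variable {S : Finset ℤ} {K : ℤ} {l r : ℕ} {f : (ℤ → ℤ) → ℤ}

theorem extendedRule_localRule : LocalRule l r (extendedRule S l r f) := by
  intro c d h
  have hwin : Set.EqOn c d (Set.Ico (-(l : ℤ)) r) := fun j hj => h j hj.1 hj.2.le
  have hwin' : Set.EqOn (fun j => c (j + 1)) (fun j => d (j + 1)) (Set.Ico (-(l : ℤ)) r) :=
    fun j hj => h (j + 1) (by linarith [hj.1]) (by linarith [hj.2])
  rw [extendedRule, extendedRule, h r (by omega) le_rfl, potential_congr hwin,
    potential_congr hwin']

theorem extendedRule_closed (hNC : NC S f) (hl : LocalRule l r f) (h0 : 0 ∈ S) (hK : K ∈ S)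
    (hSK : S ⊆ Icc 0 K) (hC : Closed S f) : Closed (Icc 0 K) (extendedRule S l r f) := by
  intro c hc
  have hr := mem_Icc.mp (hc r)
  have hlo := potential_shift_le hNC hl h0 hSK hC hr.1
  have hhi := potential_le_shift hNC hl h0 hK hSK hC (mem_Icc.mp (hc (-l))).2
  rw [mem_Icc, extendedRule]
  constructor <;> linarith

theorem extendedRule_nc (T : Finset ℤ) : NC T (extendedRule S l r f) :=
  nc_of_eq_add_sub T _ fun _ => rfl

theorem extendedRule_eq (hNC : NC S f) (hl : LocalRule l r f) (h0 : 0 ∈ S) (hSK : S ⊆ Icc 0 K)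
    (hC : Closed S f) {x : ℤ → ℤ} (hx : Config S x) : extendedRule S l r f x = f x := by
  rw [extendedRule, potential_eq_flux h0 hSK hC hx,
    potential_eq_flux h0 hSK hC (fun j => hx (j + 1)), hNC.eq_add_flux_sub_flux hl h0 hx]

end ExtendedRule

def translateStates (m : ℤ) (f : (ℤ → ℤ) → ℤ) (c : ℤ → ℤ) : ℤ := f (fun j => c j + m) - m

section TranslateStates

variable {S : Finset ℤ} {l r : ℕ} {f : (ℤ → ℤ) → ℤ}

theorem Config.add_of_image_sub {m : ℤ} {c : ℤ → ℤ} (hc : Config (S.image (· - m)) c) :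
    Config S (fun j => c j + m) := fun j => by
  obtain ⟨t, ht, hte⟩ := mem_image.mp (hc j)
  show c j + m ∈ S
  rwa [← hte, sub_add_cancel]

theorem LocalRule.translateStates (hl : LocalRule l r f) (m : ℤ) :
    LocalRule l r (translateStates m f) := fun c d h => by
  rw [_root_.translateStates, _root_.translateStates,
    hl _ _ fun j hj₁ hj₂ => by rw [h j hj₁ hj₂]]

theorem Closed.translateStates (hC : Closed S f) (m : ℤ) :
    Closed (S.image (· - m)) (translateStates m f) := fun _ hc =>
  mem_image_of_mem _ (hC _ hc.add_of_image_sub)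

theorem NC.translateStates (hNC : NC S f) (m : ℤ) :
    NC (S.image (· - m)) (translateStates m f) := by
  intro c hc p hp hper
  have h := hNC _ hc.add_of_image_sub p hp fun i => by simp only [hper i]
  simp only [glob, _root_.translateStates, sum_sub_distrib, sum_add_distrib] at h ⊢
  rw [h]
  ring

theorem glob_translateStates (m : ℤ) (f : (ℤ → ℤ) → ℤ) (c : ℤ → ℤ) (i : ℤ) :
    glob (translateStates m f) (fun j => c j - m) i = glob f c i - m := by
  simp only [glob, translateStates, sub_add_cancel]

end TranslateStates

/-- Any NCCA with states `S ⊂ ℤ` is a sub-automaton of a NCCA with the full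
interval `{0, ..., max S - min S}` of states and a neighborhood of twice the size. -/
theorem extension_to_interval_states
    (S : Finset ℤ) (hne : S.Nonempty) (l r : ℕ) (f : (ℤ → ℤ) → ℤ)
    (hl : LocalRule l r f) (hC : Closed S f) (hNC : NC S f) :
    ∃ (l' r' : ℕ) (g : (ℤ → ℤ) → ℤ) (φ : ℤ → ℤ),
      l' + r' + 1 = 2 * (l + r + 1) ∧
      LocalRule l' r' g ∧
      Closed (Finset.Icc 0 (S.max' hne - S.min' hne)) g ∧
      NC (Finset.Icc 0 (S.max' hne - S.min' hne)) g ∧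
      Set.InjOn φ (S : Set ℤ) ∧
      (∀ s ∈ S, φ s ∈ Finset.Icc (0 : ℤ) (S.max' hne - S.min' hne)) ∧
      (∀ c : ℤ → ℤ, Config S c → ∀ i : ℤ, φ (glob f c i) = glob g (fun j => φ (c j)) i) := by
  set m := S.min' hne
  set S' := S.image (· - m)
  have h0 : 0 ∈ S' := mem_image.mpr ⟨m, S.min'_mem hne, sub_self m⟩
  have hK : S.max' hne - m ∈ S' := mem_image_of_mem _ (S.max'_mem hne)
  have hSK : S' ⊆ Icc 0 (S.max' hne - m) := fun s hs => by
    obtain ⟨t, ht, rfl⟩ := mem_image.mp hs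
    exact mem_Icc.mpr ⟨sub_nonneg.mpr (S.min'_le t ht), sub_le_sub_right (S.le_max' t ht) m⟩
  have hNC' := hNC.translateStates m
  have hl' := hl.translateStates m
  have hC' := hC.translateStates m
  refine ⟨l, r + (l + r + 1), extendedRule S' l r (translateStates m f), (· - m), by omega,
    extendedRule_localRule.mono le_rfl (by omega), extendedRule_closed hNC' hl' h0 hK hSK hC',
    extendedRule_nc _, fun a _ b _ hab => sub_left_injective hab,
    fun s hs => hSK (mem_image_of_mem _ hs), fun c hc i => ?_⟩
  have hc' : Config S' (fun j => c j - m) := fun j => mem_image_of_mem _ (hc j)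
  exact (glob_translateStates m f c i).symm.trans
    (extendedRule_eq hNC' hl' h0 hSK hC' (hc'.shift i)).symm
end

section
/- Let F = (1, S, N, f) be a CA with abstract states S = {s_0, ..., s_{q-1}}, neighborhood of size n, and let φ : S → ℤ be injective. The relabeled CA is number-conserving if and only if for all (x_1,...,x_n) ∈ S^n: φ(f(x_1,...,x_n)) = φ(x_1) + ∑_{k=1}^{n-1} [ φ(f(s_0,...,s_0 (k times), x_2,...,x_{n-k+1})) − φ(f(s_0,...,s_0 (k times), x_1,...,x_{n-k})) ]. -/
open Finset

/-- Global map of a CA with abstract state type S. -/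
def globS {S : Type*} (f : (ℤ → S) → S) (c : ℤ → S) : ℤ → S := fun i => f (fun j => c (i + j))

/-- The abstract local rule only depends on the neighborhood {-l,...,r}. -/
def LocalRuleS {S : Type*} (l r : ℕ) (f : (ℤ → S) → S) : Prop :=
  ∀ c d : ℤ → S, (∀ j : ℤ, -(l : ℤ) ≤ j → j ≤ (r : ℤ) → c j = d j) → f c = f d

/-- The rule obtained by relabeling the states through an injection φ : S → ℤ. -/
noncomputable def relabel {S : Type*} [Nonempty S] (f : (ℤ → S) → S) (φ : S → ℤ) :
    (ℤ → ℤ) → ℤ :=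
  fun w => φ (f (fun j => Function.invFun φ (w j)))

/-- The window with k copies of s0 followed by x_{s+1}, ..., x_{s+n-k}
(positions -l..r, 1-based tuple indexing). -/
def patS {S : Type*} (l : ℕ) (s0 : S) (w : ℤ → S) (k : ℕ) (s : ℤ) : ℤ → S :=
  fun j => if j ≤ (k : ℤ) - (l : ℤ) - 1 then s0 else w (j - (k : ℤ) + s)

/-!
Relabeling turns the claim into conservation of the weight `φ` by the abstract rule. If the
identity holds, the sum of `φ ∘ f` over a period splits into a shifted sum of `φ` and
telescoping differences, since the window at `i`, padded on the left by `k` copies of `s0` and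
read one cell further, is the window at `i + 1` padded in the same way. Conversely, for two
periodic configurations differing in one cell, conservation forces the windows meeting that cell
to change the total by exactly the change of that cell. Applied to `s0 … s0 w(-l) w(-l+1) …` and
the same configuration with `w(-l)` replaced by `s0`, these windows are exactly the padded
windows `patS`, which yields the identity.
-/

open Function

theorem Function.Periodic.sum_range_add_one {G : Type*} [AddCommGroup G] {u : ℤ → G} {p : ℕ}
    (hu : Periodic u p) : ∑ i ∈ range p, u (i + 1) = ∑ i ∈ range p, u i := by
  have h := (sum_range_succ' (fun i : ℕ => u i) p).symm.trans (sum_range_succ (fun i : ℕ => u i) p)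
  push_cast at h
  rwa [show u p = u 0 by simpa using hu 0, add_left_inj] at h

theorem Function.Periodic.sum_range_add_s11 {G : Type*} [AddCommGroup G] {u : ℤ → G} {p : ℕ}
    (hu : Periodic u p) (t : ℤ) : ∑ i ∈ range p, u (i + t) = ∑ i ∈ range p, u i := by
  induction t using Int.induction_on generalizing u with
  | zero => simp
  | succ t ih =>
    rw [← ih hu, ← (hu.add_const t).sum_range_add_one]
    exact sum_congr rfl fun i _ => congrArg u (by ring)
  | pred t ih =>
    rw [← ih hu, ← (hu.add_const (-t - 1)).sum_range_add_one]
    exact sum_congr rfl fun i _ => congrArg u (by ring)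

theorem sum_Icc_one_eq_sum_range {M : Type*} [AddCommMonoid M] (g : ℕ → M) (n : ℕ) :
    ∑ k ∈ Icc 1 n, g k = ∑ k ∈ range n, g (k + 1) := by
  rw [range_eq_Ico, sum_Ico_add', zero_add, Ico_add_one_right_eq_Icc]

def ConservesWeight {S G : Type*} [AddCommMonoid G] (φ : S → G) (f : (ℤ → S) → S) : Prop :=
  ∀ d : ℤ → S, ∀ p : ℕ, 0 < p → Periodic d p →
    ∑ i ∈ range p, φ (globS f d i) = ∑ i ∈ range p, φ (d i)

theorem glob_relabel {S : Type*} [Nonempty S] (f : (ℤ → S) → S) (φ : S → ℤ) (c : ℤ → ℤ) :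
    glob (relabel f φ) c = fun i => φ (globS f (invFun φ ∘ c) i) :=
  rfl

theorem nc_relabel_iff_conservesWeight {S : Type*} [Fintype S] [Nonempty S] {f : (ℤ → S) → S}
    {φ : S → ℤ} (hφ : Injective φ) :
    NC (image φ univ) (relabel f φ) ↔ ConservesWeight φ f := by
  constructor
  · intro h d p hp hd
    have := h (φ ∘ d) (fun i => mem_image_of_mem φ (mem_univ _)) p hp (hd.comp φ)
    rwa [glob_relabel, ← comp_assoc, invFun_comp hφ] at this
  · intro h c hc p hp hc_per
    replace hc_per : Periodic c p := hc_per
    have hφc : φ ∘ invFun φ ∘ c = c :=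
      funext fun i => invFun_eq (by simpa using hc i)
    have := h (invFun φ ∘ c) p hp (hc_per.comp _)
    rw [glob_relabel]
    conv_rhs => rw [← hφc]
    exact this

section Rules

variable {S G : Type*} [AddCommGroup G] {l r : ℕ} {f : (ℤ → S) → S} {φ : S → G}

theorem patS_window_one (s0 : S) (d : ℤ → S) (i : ℤ) (k : ℕ) :
    patS l s0 (fun j => d (i + j)) k 1 = patS l s0 (fun j => d (i + 1 + j)) k 0 := by
  funext j
  simp only [patS]
  ring_nf

theorem conservesWeight_of_boccaraFuks (s0 : S)
    (H : ∀ w : ℤ → S, φ (f w) = φ (w (-(l : ℤ))) +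
      ∑ k ∈ Icc 1 (l + r), (φ (f (patS l s0 w k 1)) - φ (f (patS l s0 w k 0)))) :
    ConservesWeight φ f := by
  intro d p _ hd
  set B : ℤ → ℕ → G := fun i k => φ (f (patS l s0 (fun j => d (i + j)) k 0))
  have hB : ∀ k, Periodic (B · k) p := fun k i => by
    simp only [B, add_right_comm i, show ∀ x, d (x + p) = d x from hd]
  calc ∑ i ∈ range p, φ (globS f d i)
      = ∑ i ∈ range p, (φ (d (i + -(l : ℤ))) +
          ∑ k ∈ Icc 1 (l + r), (B (i + 1) k - B i k)) := by
        refine sum_congr rfl fun i _ => ?_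
        simp only [globS, H (fun j => d (i + j)), B, patS_window_one]
    _ = ∑ i ∈ range p, φ (d i) := by
        have hφd := (hd.comp φ).sum_range_add_s11 (-l)
        simp only [comp_apply] at hφd
        rw [sum_add_distrib, sum_comm, hφd]
        simp only [sum_sub_distrib, (hB _).sum_range_add_s11, sub_self, sum_const_zero, add_zero]

theorem ConservesWeight.map_const (h : ConservesWeight φ f) (s : S) :
    φ (f fun _ => s) = φ s := by
  simpa [globS] using h (fun _ => s) 1 one_pos fun _ => rfl

theorem ConservesWeight.sum_globS_sub_of_periodic (hl : LocalRuleS l r f)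
    (h : ConservesWeight φ f) {d d' : ℤ → S} {p : ℕ} (hp : l + r < p) (hd : Periodic d p)
    (hd' : Periodic d' p) (hdd' : ∀ m : ℤ, r < m → m < r + p → d m = d' m) :
    ∑ i ∈ range (l + r + 1), (φ (globS f d i) - φ (globS f d' i)) = φ (d r) - φ (d' r) := by
  have hfar : ∀ i ∈ Ico (l + r + 1) p, φ (globS f d i) - φ (globS f d' i) = 0 := by
    intro i hi
    rw [mem_Ico] at hi
    rw [sub_eq_zero, globS, globS, hl _ _ fun j hj₁ hj₂ => hdd' _ (by omega) (by omega)]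
  have hφd := (hd.comp φ).sum_range_add_s11 r
  have hφd' := (hd'.comp φ).sum_range_add_s11 r
  simp only [comp_apply] at hφd hφd'
  calc ∑ i ∈ range (l + r + 1), (φ (globS f d i) - φ (globS f d' i))
      = ∑ i ∈ range p, (φ (globS f d i) - φ (globS f d' i)) := by
        rw [← sum_range_add_sum_Ico _ hp, sum_eq_zero hfar, add_zero]
    _ = ∑ i ∈ range p, (φ (d (i + r)) - φ (d' (i + r))) := by
        rw [sum_sub_distrib, sum_sub_distrib, h d p (by omega) hd, h d' p (by omega) hd', hφd, hφd']
    _ = φ (d r) - φ (d' r) := by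
        rw [sum_eq_single_of_mem 0 (mem_range.2 (by omega))]
        · simp
        · intro i hi hi0
          rw [mem_range] at hi
          rw [hdd' _ (by omega) (by omega), sub_self]

theorem ConservesWeight.sum_globS_sub (hl : LocalRuleS l r f) (h : ConservesWeight φ f)
    {u u' : ℤ → S} (huu' : ∀ m ≠ (r : ℤ), u m = u' m) :
    ∑ i ∈ range (l + r + 1), (φ (globS f u i) - φ (globS f u' i)) = φ (u r) - φ (u' r) := by
  set p := 2 * (l + r) + 1
  have hp : (0 : ℤ) < p := by positivity
  -- periodize both configurations from the fundamental domain `[-l, -l + p)`, which contains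
  -- every cell read by the windows `0, ..., l + r`
  let per : (ℤ → S) → ℤ → S := fun v m => v (toIcoMod hp (-l) m)
  have hper : ∀ v, Periodic (per v) p := fun v m => by simp only [per, toIcoMod_add_right]
  have hper_eq : ∀ v m, -(l : ℤ) ≤ m → m < -l + p → per v m = v m := fun v m h₁ h₂ => by
    simp only [per, (toIcoMod_eq_self hp).2 ⟨h₁, h₂⟩]
  have hglob : ∀ v, ∀ i ∈ range (l + r + 1), globS f (per v) i = globS f v i := by
    intro v i hi
    rw [mem_range] at hi
    exact hl _ _ fun j hj₁ hj₂ => hper_eq v _ (by omega) (by omega)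
  have hoff : ∀ m : ℤ, r < m → m < r + p → per u m = per u' m := by
    intro m hm₁ hm₂
    refine huu' _ fun hr => ?_
    obtain ⟨-, z, hz⟩ := (toIcoMod_eq_iff hp).1 hr
    rw [zsmul_eq_mul, Int.cast_id] at hz
    rcases le_or_gt z 0 with hz0 | hz0 <;> nlinarith
  have := h.sum_globS_sub_of_periodic hl (by omega) (hper u) (hper u') hoff
  rwa [sum_congr rfl fun i hi => by rw [hglob u i hi, hglob u' i hi],
    hper_eq u _ (by omega) (by omega), hper_eq u' _ (by omega) (by omega)] at this

theorem ConservesWeight.boccaraFuks (hl : LocalRuleS l r f) (h : ConservesWeight φ f)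
    (s0 : S) (w : ℤ → S) :
    φ (f w) = φ (w (-(l : ℤ))) +
      ∑ k ∈ Icc 1 (l + r), (φ (f (patS l s0 w k 1)) - φ (f (patS l s0 w k 0))) := by
  set A : ℕ → G := fun k => φ (f (patS l s0 w k 0))
  set B : ℕ → G := fun k => φ (f (patS l s0 w k 1))
  -- `u = … s0 s0 w(-l) w(-l+1) …` with `w(-l)` at cell `r`; `u'` has `s0` at cell `r` instead
  let u : ℤ → S := fun m => if m < r then s0 else w (m - (l + r))
  let u' : ℤ → S := fun m => if m ≤ r then s0 else w (m - (l + r))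
  have hu : ∀ k ≤ l + r, globS f u (l + r - k : ℕ) = f (patS l s0 w k 0) := by
    intro k hk
    refine congrArg f (funext fun j => ?_)
    simp only [u, patS, Nat.cast_sub hk, Nat.cast_add]
    split_ifs <;> first | rfl | omega | (congr 1; omega)
  have hu' : ∀ k ≤ l + r, globS f u' (l + r - k : ℕ) = f (patS l s0 w (k + 1) 1) := by
    intro k hk
    refine congrArg f (funext fun j => ?_)
    simp only [u', patS, Nat.cast_sub hk, Nat.cast_add, Nat.cast_one]
    split_ifs <;> first | rfl | omega | (congr 1; omega)
  have hflux : ∑ k ∈ range (l + r + 1), (A k - B (k + 1)) = φ (w (-(l : ℤ))) - φ s0 := by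
    have key := h.sum_globS_sub hl (u := u) (u' := u') fun m hm => by
      simp only [u, u']
      split_ifs <;> first | rfl | omega
    have hur : u r = w (-(l : ℤ)) := by simp only [u, lt_irrefl, if_false]; congr 1; ring
    have hu'r : u' r = s0 := if_pos le_rfl
    rw [hur, hu'r, ← sum_range_reflect] at key
    rw [← key]
    refine sum_congr rfl fun k hk => ?_
    rw [mem_range] at hk
    rw [show l + r + 1 - 1 - k = l + r - k by omega, hu k (by omega), hu' k (by omega)]
  have hA0 : A 0 = φ (f w) :=
    congrArg φ (hl _ _ fun j hj _ => by simp only [patS]; split_ifs <;> first | omega | congr 1; ring)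
  have hB : B (l + r + 1) = φ s0 := by
    rw [← h.map_const s0]
    exact congrArg φ (hl _ _ fun j _ hj => by simp only [patS]; split_ifs <;> first | rfl | omega)
  rw [sum_sub_distrib, sum_range_succ', sum_range_succ, hA0, hB] at hflux
  rw [sum_Icc_one_eq_sum_range, sum_sub_distrib]
  linear_combination (norm := abel) hflux

theorem conservesWeight_iff_boccaraFuks (hl : LocalRuleS l r f) (s0 : S) :
    ConservesWeight φ f ↔ ∀ w : ℤ → S, φ (f w) = φ (w (-(l : ℤ))) +
      ∑ k ∈ Icc 1 (l + r), (φ (f (patS l s0 w k 1)) - φ (f (patS l s0 w k 0))) :=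
  ⟨fun h => h.boccaraFuks hl s0, conservesWeight_of_boccaraFuks s0⟩

end Rules

/-- The relabeled CA is number-conserving iff the relabeling φ satisfies the
linear system coming from the Boccara–Fuks condition. -/
theorem relabeled_numberConserving_iff
    (S : Type) [Fintype S] [Nonempty S] (l r : ℕ) (f : (ℤ → S) → S) (hl : LocalRuleS l r f)
    (s0 : S) (φ : S → ℤ) (hφ : Function.Injective φ) :
    NC (Finset.image φ Finset.univ) (relabel f φ) ↔
      ∀ w : ℤ → S,
        φ (f w) = φ (w (-(l : ℤ))) +
          ∑ k ∈ Finset.Icc 1 (l + r),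
            (φ (f (patS l s0 w k 1)) - φ (f (patS l s0 w k 0))) :=
  (nc_relabel_iff_conservesWeight hφ).trans (conservesWeight_iff_boccaraFuks hl s0)
end
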